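/- Let m ≥ 2 and γ ≥ 0 be integers with (m,γ) ≠ (2,0) (so that γ + m − 2 > 0), let P be a homogeneous harmonic polynomial of degree γ on ℝ^{2m}, and let h, k be real numbers. Define u on ℝ^{2m} \ {0} by u(x) = (h + k/(4(γ+m−2))) ‖x‖^{2−2m−2γ} P(x) − (k/(4(γ+m−2))) ‖x‖^{4−2m−2γ} P(x). Then Δ(Δu) = 0 on ℝ^{2m} \ {0}; u(x) = h P(x) and Δu(x) = k P(x) whenever ‖x‖ = 1; and u(x) = O(‖x‖^{4−2m−γ}) as ‖x‖ → ∞. -/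

import Mathlib

/-- The Euclidean Laplacian on `ℝ^n`: the trace of the Hessian, computed as the sum of the
second derivatives in the coordinate directions. -/
noncomputable def laplacian {n : ℕ} (f : EuclideanSpace ℝ (Fin n) → ℝ)
    (x : EuclideanSpace ℝ (Fin n)) : ℝ :=
  ∑ i : Fin n,
    iteratedFDeriv ℝ 2 f x ![EuclideanSpace.single i 1, EuclideanSpace.single i 1]

/-- `P : ℝ^n → ℝ` is a homogeneous harmonic polynomial of degree `γ`: it is a polynomial
function, homogeneous of degree `γ` (`P (t • x) = t ^ γ * P x`), and harmonic (`Δ P = 0`). -/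
def IsHomHarmonicPoly (n γ : ℕ) (P : EuclideanSpace ℝ (Fin n) → ℝ) : Prop :=
  (∃ p : MvPolynomial (Fin n) ℝ, ∀ x, P x = MvPolynomial.eval (fun i => x i) p) ∧
  (∀ (t : ℝ) (x : EuclideanSpace ℝ (Fin n)), P (t • x) = t ^ γ * P x) ∧
  (∀ x, laplacian P x = 0)

/-- The single-mode exterior bi-harmonic extension
`H^o_{h,k}(x) = (h + k/(4(γ+m-2))) ‖x‖^(2-2m-2γ) P(x) - (k/(4(γ+m-2))) ‖x‖^(4-2m-2γ) P(x)`
on `ℂ^m ≅ ℝ^(2m)`. -/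
noncomputable def Hout (m γ : ℕ) (P : EuclideanSpace ℝ (Fin (2 * m)) → ℝ) (h k : ℝ)
    (x : EuclideanSpace ℝ (Fin (2 * m))) : ℝ :=
  (h + k / (4 * ((γ : ℝ) + (m : ℝ) - 2))) * ‖x‖ ^ ((2 : ℝ) - 2 * (m : ℝ) - 2 * (γ : ℝ)) * P x
    - k / (4 * ((γ : ℝ) + (m : ℝ) - 2)) * ‖x‖ ^ ((4 : ℝ) - 2 * (m : ℝ) - 2 * (γ : ℝ)) * P x

/-!
For a homogeneous harmonic polynomial `P` of degree `γ` on `ℝⁿ`, the product rule for `Δ`,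
Euler's identity `⟪x, ∇P x⟫ = γ P x` and `Δ ‖x‖ ^ t = t (t + n - 2) ‖x‖ ^ (t - 2)` give
`Δ (‖x‖ ^ t P) = t (t + n - 2 + 2γ) ‖x‖ ^ (t - 2) P`. For `n = 2m` this vanishes at
`t = 2 - 2m - 2γ`, while `t = 4 - 2m - 2γ` yields `-4 (γ + m - 2) ‖x‖ ^ (2 - 2m - 2γ) P`, which
the coefficient of that term normalises; so `Δu = k ‖x‖ ^ (2 - 2m - 2γ) P`, again harmonic away
from `0`. The growth bound comes from `|P x| ≤ M ‖x‖ ^ γ`, by homogeneity and compactness of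
the unit sphere.
-/

open scoped Laplacian Gradient RealInnerProductSpace Topology

section NormedSpace

variable {E : Type*} [NormedAddCommGroup E] [NormedSpace ℝ E]

theorem ContDiffAt.differentiableAt_deriv {g : ℝ → ℝ} {u : ℝ} (hg : ContDiffAt ℝ 2 g u) :
    DifferentiableAt ℝ (deriv g) u := by
  have h := ((hg.fderiv_right (m := 1) (by norm_num)).differentiableAt (by simp)).clm_apply
    (differentiableAt_const (1 : ℝ))
  simpa only [fderiv_apply_one_eq_deriv] using h

theorem ContDiffAt.hasFDerivAt_fderiv {f : E → ℝ} {x : E} (hf : ContDiffAt ℝ 2 f x) :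
    HasFDerivAt (fderiv ℝ f) (fderiv ℝ (fderiv ℝ f) x) x :=
  ((hf.fderiv_right (m := 1) (by norm_num)).differentiableAt (by simp)).hasFDerivAt

theorem fderiv_fderiv_mul_apply {f g : E → ℝ} {x : E} (hf : ContDiffAt ℝ 2 f x)
    (hg : ContDiffAt ℝ 2 g x) (v w : E) :
    fderiv ℝ (fderiv ℝ (f * g)) x v w = f x * fderiv ℝ (fderiv ℝ g) x v w
      + fderiv ℝ f x v * fderiv ℝ g x w + fderiv ℝ g x v * fderiv ℝ f x w
      + g x * fderiv ℝ (fderiv ℝ f) x v w := by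
  have hev : fderiv ℝ (f * g) =ᶠ[𝓝 x] fun y => f y • fderiv ℝ g y + g y • fderiv ℝ f y := by
    filter_upwards [hf.eventually (by simp), hg.eventually (by simp)] with y hfy hgy
    exact fderiv_mul (hfy.differentiableAt (by simp)) (hgy.differentiableAt (by simp))
  have hd := ((hf.differentiableAt (by simp)).hasFDerivAt.fun_smul hg.hasFDerivAt_fderiv).fun_add
    ((hg.differentiableAt (by simp)).hasFDerivAt.fun_smul hf.hasFDerivAt_fderiv)
  rw [hev.fderiv_eq, hd.fderiv]
  simp only [add_apply, smul_apply, ContinuousLinearMap.smulRight_apply, smul_eq_mul]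
  ring

theorem fderiv_fderiv_comp_apply {g : ℝ → ℝ} {φ : E → ℝ} {x : E} (hg : ContDiffAt ℝ 2 g (φ x))
    (hφ : ContDiffAt ℝ 2 φ x) (v w : E) :
    fderiv ℝ (fderiv ℝ (g ∘ φ)) x v w = deriv (deriv g) (φ x) * fderiv ℝ φ x v * fderiv ℝ φ x w
      + deriv g (φ x) * fderiv ℝ (fderiv ℝ φ) x v w := by
  have hev : fderiv ℝ (g ∘ φ) =ᶠ[𝓝 x] fun y => (deriv g ∘ φ) y • fderiv ℝ φ y := by
    have hg₁ : ∀ᶠ y in 𝓝 x, DifferentiableAt ℝ g (φ y) :=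
      hφ.continuousAt.eventually ((hg.eventually (by simp)).mono
        fun u hu => hu.differentiableAt (by simp))
    filter_upwards [hg₁, hφ.eventually (by simp)] with y hgy hφy
    exact (hgy.hasDerivAt.comp_hasFDerivAt y
      (hφy.differentiableAt (by simp)).hasFDerivAt).fderiv
  have hd := (hg.differentiableAt_deriv.hasDerivAt.comp_hasFDerivAt x
      (hφ.differentiableAt (by simp)).hasFDerivAt).fun_smul hφ.hasFDerivAt_fderiv
  rw [hev.fderiv_eq, hd.fderiv]
  simp only [Function.comp_apply, add_apply, smul_apply, ContinuousLinearMap.smulRight_apply,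
    smul_eq_mul]
  ring

theorem fderiv_apply_self_of_homogeneous {P : E → ℝ} {γ : ℕ}
    (hhom : ∀ (t : ℝ) (x : E), P (t • x) = t ^ γ * P x) {x : E} (hP : DifferentiableAt ℝ P x) :
    fderiv ℝ P x x = γ * P x := by
  have hline : HasDerivAt (fun t : ℝ => t • x) x 1 := by
    simpa using (hasDerivAt_id (1 : ℝ)).smul_const x
  have h₁ : HasDerivAt (fun t : ℝ => P (t • x)) (fderiv ℝ P x x) 1 :=
    hP.hasFDerivAt.comp_hasDerivAt_of_eq 1 hline (one_smul ℝ x).symm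
  have h₂ : HasDerivAt (fun t : ℝ => t ^ γ * P x) (γ * 1 ^ (γ - 1) * P x) 1 :=
    (hasDerivAt_pow γ 1).mul_const (P x)
  simp_rw [hhom] at h₁
  simpa using h₁.unique h₂

end NormedSpace

theorem deriv_deriv_rpow_const (a u : ℝ) :
    deriv (deriv fun u : ℝ => u ^ a) u = a * (a - 1) * u ^ (a - 2) := by
  simp only [Real.deriv_rpow_const', deriv_const_mul_field', Real.deriv_rpow_const]
  ring_nf

theorem norm_rpow_eq_comp {E : Type*} [SeminormedAddCommGroup E] (t : ℝ) :
    (fun y : E => ‖y‖ ^ t) = (fun u : ℝ => u ^ (t / 2)) ∘ fun y : E => ‖y‖ ^ 2 := by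
  ext y
  simp only [Function.comp_apply, ← Real.rpow_natCast_mul (norm_nonneg y)]
  ring_nf

section InnerProductSpace

variable {E : Type*} [NormedAddCommGroup E] [InnerProductSpace ℝ E]

theorem fderiv_fderiv_norm_sq_apply (x v w : E) :
    fderiv ℝ (fderiv ℝ fun y : E => ‖y‖ ^ 2) x v w = 2 * ⟪v, w⟫ := by
  have h : fderiv ℝ (fun y : E => ‖y‖ ^ 2) = ⇑((2 : ℝ) • innerSL ℝ (E := E)) := by
    rw [fderiv_norm_sq]; ext; simp [two_smul]
  rw [h, ContinuousLinearMap.fderiv, smul_apply, smul_apply, innerSL_apply_apply, smul_eq_mul]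

theorem hasFDerivAt_norm_rpow_of_ne_zero (t : ℝ) {x : E} (hx : x ≠ 0) :
    HasFDerivAt (fun y : E => ‖y‖ ^ t) ((t * ‖x‖ ^ (t - 2)) • innerSL ℝ x) x := by
  have hq : (‖x‖ ^ 2 : ℝ) ≠ 0 := by positivity
  have h := (Real.hasDerivAt_rpow_const (p := t / 2) (Or.inl hq)).comp_hasFDerivAt x
    (hasStrictFDerivAt_norm_sq x).hasFDerivAt
  rw [norm_rpow_eq_comp]
  refine h.congr_fderiv (ContinuousLinearMap.ext fun v => ?_)
  simp only [smul_apply, smul_eq_mul, ← Real.rpow_natCast_mul (norm_nonneg x)]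
  ring_nf

theorem contDiffAt_norm_rpow (t : ℝ) {x : E} (hx : x ≠ 0) :
    ContDiffAt ℝ 2 (fun y : E => ‖y‖ ^ t) x :=
  (Real.contDiffAt_rpow_const_of_ne (norm_ne_zero_iff.2 hx)).comp x (contDiffAt_norm ℝ hx)

variable [CompleteSpace E]

theorem gradient_norm_sq (x : E) : ∇ (fun y : E => ‖y‖ ^ 2) x = (2 : ℝ) • x :=
  ext_inner_right ℝ fun v => by
    rw [inner_gradient_left, fderiv_norm_sq_apply, real_inner_smul_left]
    simp [two_smul, two_mul]

end InnerProductSpace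

section FiniteDimensional

variable {E : Type*} [NormedAddCommGroup E] [InnerProductSpace ℝ E] [FiniteDimensional ℝ E]

theorem laplacian_eq_sum_fderiv_fderiv {ι : Type*} [Fintype ι] (b : OrthonormalBasis ι ℝ E)
    (f : E → ℝ) (x : E) : Δ f x = ∑ i, fderiv ℝ (fderiv ℝ f) x (b i) (b i) := by
  simp [InnerProductSpace.laplacian_eq_iteratedFDeriv_orthonormalBasis f b,
    iteratedFDeriv_two_apply]

theorem sum_fderiv_mul_fderiv {ι : Type*} [Fintype ι] (b : OrthonormalBasis ι ℝ E)
    (f g : E → ℝ) (x : E) :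
    ∑ i, fderiv ℝ f x (b i) * fderiv ℝ g x (b i) = ⟪∇ f x, ∇ g x⟫ := by
  simp only [← inner_gradient_left]
  simpa [real_inner_comm] using b.sum_inner_mul_inner (∇ f x) (∇ g x)

theorem laplacian_mul {f g : E → ℝ} {x : E} (hf : ContDiffAt ℝ 2 f x) (hg : ContDiffAt ℝ 2 g x) :
    Δ (f * g) x = f x * Δ g x + 2 * ⟪∇ f x, ∇ g x⟫ + g x * Δ f x := by
  let b := stdOrthonormalBasis ℝ E
  simp only [laplacian_eq_sum_fderiv_fderiv b, fderiv_fderiv_mul_apply hf hg,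
    ← sum_fderiv_mul_fderiv b, Finset.mul_sum, ← Finset.sum_add_distrib]
  exact Finset.sum_congr rfl fun i _ => by ring

theorem laplacian_comp {g : ℝ → ℝ} {φ : E → ℝ} {x : E} (hg : ContDiffAt ℝ 2 g (φ x))
    (hφ : ContDiffAt ℝ 2 φ x) :
    Δ (g ∘ φ) x = deriv (deriv g) (φ x) * ‖∇ φ x‖ ^ 2 + deriv g (φ x) * Δ φ x := by
  let b := stdOrthonormalBasis ℝ E
  simp only [laplacian_eq_sum_fderiv_fderiv b, fderiv_fderiv_comp_apply hg hφ,
    ← real_inner_self_eq_norm_sq, ← sum_fderiv_mul_fderiv b, Finset.mul_sum,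
    ← Finset.sum_add_distrib]
  exact Finset.sum_congr rfl fun i _ => by ring

theorem laplacian_norm_sq (x : E) :
    Δ (fun y : E => ‖y‖ ^ 2) x = 2 * Module.finrank ℝ E := by
  simp [laplacian_eq_sum_fderiv_fderiv (stdOrthonormalBasis ℝ E), fderiv_fderiv_norm_sq_apply,
    mul_comm]

theorem laplacian_norm_rpow (t : ℝ) {x : E} (hx : x ≠ 0) :
    Δ (fun y : E => ‖y‖ ^ t) x = t * (t + Module.finrank ℝ E - 2) * ‖x‖ ^ (t - 2) := by
  have hr : 0 < ‖x‖ := norm_pos_iff.2 hx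
  have hq : ContDiffAt ℝ 2 (fun y : E => ‖y‖ ^ 2) x := (contDiff_norm_sq ℝ).contDiffAt
  have hg : ContDiffAt ℝ 2 (fun u : ℝ => u ^ (t / 2)) (‖x‖ ^ 2) :=
    Real.contDiffAt_rpow_const_of_ne (by positivity)
  have hpow₁ : (‖x‖ ^ 2) ^ (t / 2 - 1) = ‖x‖ ^ (t - 2) := by
    rw [← Real.rpow_natCast_mul hr.le]; ring_nf
  have hpow₂ : (‖x‖ ^ 2) ^ (t / 2 - 2) = ‖x‖ ^ (t - 2) / ‖x‖ ^ 2 := by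
    rw [← Real.rpow_natCast_mul hr.le, ← Real.rpow_two, ← Real.rpow_sub hr]; ring_nf
  rw [norm_rpow_eq_comp, laplacian_comp (φ := fun y : E => ‖y‖ ^ 2) hg hq,
    deriv_deriv_rpow_const, Real.deriv_rpow_const, gradient_norm_sq, laplacian_norm_sq,
    norm_smul, hpow₁, hpow₂, Real.norm_two]
  field_simp
  ring

theorem laplacian_norm_rpow_mul {P : E → ℝ} {γ : ℕ} (t : ℝ) {x : E} (hx : x ≠ 0)
    (hP : ContDiffAt ℝ 2 P x) (hhom : ∀ (t : ℝ) (x : E), P (t • x) = t ^ γ * P x)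
    (hharm : Δ P x = 0) :
    Δ (fun y => ‖y‖ ^ t * P y) x
      = t * (t + Module.finrank ℝ E - 2 + 2 * γ) * ‖x‖ ^ (t - 2) * P x := by
  have hcross : ⟪∇ (fun y : E => ‖y‖ ^ t) x, ∇ P x⟫ = t * ‖x‖ ^ (t - 2) * (γ * P x) := by
    rw [inner_gradient_left, (hasFDerivAt_norm_rpow_of_ne_zero t hx).fderiv, smul_apply,
      innerSL_apply_apply, real_inner_comm, inner_gradient_left,
      fderiv_apply_self_of_homogeneous hhom (hP.differentiableAt (by simp)), smul_eq_mul]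
  change Δ ((fun y : E => ‖y‖ ^ t) * P) x = _
  rw [laplacian_mul (contDiffAt_norm_rpow t hx) hP, hharm, hcross, laplacian_norm_rpow t hx]
  ring

end FiniteDimensional

theorem laplacian_eq_laplacian {n : ℕ} (f : EuclideanSpace ℝ (Fin n) → ℝ) :
    laplacian f = Δ f := by
  ext x
  simp [laplacian, InnerProductSpace.laplacian_eq_iteratedFDeriv_orthonormalBasis f
    (EuclideanSpace.basisFun (Fin n) ℝ)]

theorem contDiff_eval_euclideanSpace {ι : Type*} [Fintype ι] {r : WithTop ℕ∞}
    (p : MvPolynomial ι ℝ) :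
    ContDiff ℝ r fun x : EuclideanSpace ℝ ι => MvPolynomial.eval (fun i => x i) p := by
  induction p using MvPolynomial.induction_on with
  | C a => simpa using contDiff_const
  | add p q hp hq => simpa using hp.add hq
  | mul_X p i hp => simpa using hp.mul (EuclideanSpace.proj i).contDiff

namespace IsHomHarmonicPoly

variable {n γ : ℕ} {P : EuclideanSpace ℝ (Fin n) → ℝ}

theorem contDiff (hP : IsHomHarmonicPoly n γ P) {r : WithTop ℕ∞} : ContDiff ℝ r P := by
  obtain ⟨⟨p, hp⟩, -⟩ := hP
  rw [funext hp]
  exact contDiff_eval_euclideanSpace p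

theorem laplacian_norm_rpow_mul (hP : IsHomHarmonicPoly n γ P) (t : ℝ)
    {x : EuclideanSpace ℝ (Fin n)} (hx : x ≠ 0) :
    Δ (fun y => ‖y‖ ^ t * P y) x = t * (t + n - 2 + 2 * γ) * ‖x‖ ^ (t - 2) * P x := by
  have hharm : Δ P x = 0 := by rw [← laplacian_eq_laplacian]; exact hP.2.2 x
  simpa using _root_.laplacian_norm_rpow_mul t hx hP.contDiff.contDiffAt hP.2.1 hharm

end IsHomHarmonicPoly

theorem exists_abs_le_mul_norm_pow_of_homogeneous {E : Type*} [NormedAddCommGroup E]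
    [NormedSpace ℝ E] [ProperSpace E] {P : E → ℝ} {γ : ℕ} (hP : Continuous P)
    (hhom : ∀ (t : ℝ) (x : E), P (t • x) = t ^ γ * P x) :
    ∃ M, ∀ x, x ≠ 0 → |P x| ≤ M * ‖x‖ ^ γ := by
  obtain ⟨M, hM⟩ := (isCompact_sphere (0 : E) 1).exists_bound_of_continuousOn hP.continuousOn
  refine ⟨M, fun x hx => ?_⟩
  have hr : ‖x‖ ≠ 0 := norm_ne_zero_iff.2 hx
  have hu : ‖x‖⁻¹ • x ∈ Metric.sphere (0 : E) 1 := by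
    simp [norm_smul, hr]
  have hPx : P x = ‖x‖ ^ γ * P (‖x‖⁻¹ • x) := by
    rw [← hhom, smul_smul, mul_inv_cancel₀ hr, one_smul]
  rw [hPx, abs_mul, abs_pow, abs_norm, mul_comm M]
  exact mul_le_mul_of_nonneg_left (by simpa using hM _ hu) (by positivity)

theorem abs_rpow_mul_le_of_abs_le {r p M a b : ℝ} {γ : ℕ} (hr : 1 ≤ r) (hp : |p| ≤ M * r ^ γ)
    (hab : a + γ ≤ b) : |r ^ a * p| ≤ M * r ^ b := by
  have hr0 : 0 < r := one_pos.trans_le hr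
  have hM : 0 ≤ M := nonneg_of_mul_nonneg_left ((abs_nonneg p).trans hp) (by positivity)
  calc |r ^ a * p| = r ^ a * |p| := by rw [abs_mul, abs_of_pos (Real.rpow_pos_of_pos hr0 a)]
    _ ≤ r ^ a * (M * r ^ γ) := by gcongr
    _ = M * r ^ (a + γ) := by rw [Real.rpow_add hr0, Real.rpow_natCast]; ring
    _ ≤ M * r ^ b := by gcongr

section Hout

variable {m γ : ℕ} {P : EuclideanSpace ℝ (Fin (2 * m)) → ℝ}

theorem Hout_eq (h k : ℝ) :
    Hout m γ P h k
      = (h + k / (4 * ((γ : ℝ) + m - 2))) • (fun y => ‖y‖ ^ ((2 : ℝ) - 2 * m - 2 * γ) * P y)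
        - (k / (4 * ((γ : ℝ) + m - 2))) • (fun y => ‖y‖ ^ ((4 : ℝ) - 2 * m - 2 * γ) * P y) := by
  ext y
  simp only [Hout, Pi.sub_apply, Pi.smul_apply, smul_eq_mul]
  ring

theorem laplacian_Hout (hd : (γ : ℝ) + m - 2 ≠ 0) (hP : IsHomHarmonicPoly (2 * m) γ P)
    (h k : ℝ) {x : EuclideanSpace ℝ (Fin (2 * m))} (hx : x ≠ 0) :
    Δ (Hout m γ P h k) x = k * (‖x‖ ^ ((2 : ℝ) - 2 * m - 2 * γ) * P x) := by
  have hC : ∀ t : ℝ, ContDiffAt ℝ 2 (fun y => ‖y‖ ^ t * P y) x :=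
    fun t => (contDiffAt_norm_rpow t hx).mul hP.contDiff.contDiffAt
  have hsmul : ∀ t c : ℝ, ContDiffAt ℝ 2 (c • fun y => ‖y‖ ^ t * P y) x :=
    fun t c => (hC t).const_smul c
  rw [Hout_eq, (hsmul _ _).laplacian_sub (hsmul _ _),
    InnerProductSpace.laplacian_smul _ (hC _), InnerProductSpace.laplacian_smul _ (hC _),
    hP.laplacian_norm_rpow_mul _ hx, hP.laplacian_norm_rpow_mul _ hx]
  simp only [smul_eq_mul]
  rw [show (4 : ℝ) - 2 * m - 2 * γ - 2 = 2 - 2 * m - 2 * γ by ring]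
  field_simp
  push_cast
  ring

theorem laplacian_laplacian_Hout (hd : (γ : ℝ) + m - 2 ≠ 0) (hP : IsHomHarmonicPoly (2 * m) γ P)
    (h k : ℝ) {x : EuclideanSpace ℝ (Fin (2 * m))} (hx : x ≠ 0) :
    Δ (Δ (Hout m γ P h k)) x = 0 := by
  have hev : Δ (Hout m γ P h k) =ᶠ[𝓝 x]
      k • fun y => ‖y‖ ^ ((2 : ℝ) - 2 * m - 2 * γ) * P y := by
    filter_upwards [isOpen_ne.mem_nhds hx] with y hy
    exact laplacian_Hout hd hP h k hy
  rw [(InnerProductSpace.laplacian_congr_nhds hev).eq_of_nhds,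
    InnerProductSpace.laplacian_smul _ ((contDiffAt_norm_rpow _ hx).mul hP.contDiff.contDiffAt),
    smul_eq_mul, hP.laplacian_norm_rpow_mul _ hx]
  push_cast
  ring

theorem exists_abs_Hout_le (hP : IsHomHarmonicPoly (2 * m) γ P) (h k : ℝ) :
    ∃ C R : ℝ, ∀ x : EuclideanSpace ℝ (Fin (2 * m)), R ≤ ‖x‖ →
      |Hout m γ P h k x| ≤ C * ‖x‖ ^ ((4 : ℝ) - 2 * m - γ) := by
  obtain ⟨M, hM⟩ :=
    exists_abs_le_mul_norm_pow_of_homogeneous (hP.contDiff (r := 0)).continuous hP.2.1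
  set c₁ := h + k / (4 * ((γ : ℝ) + m - 2))
  set c₂ := k / (4 * ((γ : ℝ) + m - 2))
  refine ⟨(|c₁| + |c₂|) * M, 1, fun x hx => ?_⟩
  have hPx := hM x (norm_pos_iff.1 (one_pos.trans_le hx))
  calc |Hout m γ P h k x|
      = |c₁ * (‖x‖ ^ ((2 : ℝ) - 2 * m - 2 * γ) * P x)
          - c₂ * (‖x‖ ^ ((4 : ℝ) - 2 * m - 2 * γ) * P x)| := by
        simp only [Hout, c₁, c₂]; ring_nf
    _ ≤ |c₁| * |‖x‖ ^ ((2 : ℝ) - 2 * m - 2 * γ) * P x|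
          + |c₂| * |‖x‖ ^ ((4 : ℝ) - 2 * m - 2 * γ) * P x| := by
        rw [← abs_mul, ← abs_mul]; exact abs_sub _ _
    _ ≤ |c₁| * (M * ‖x‖ ^ ((4 : ℝ) - 2 * m - γ)) + |c₂| * (M * ‖x‖ ^ ((4 : ℝ) - 2 * m - γ)) := by
        gcongr <;> exact abs_rpow_mul_le_of_abs_le hx hPx (by linarith)
    _ = (|c₁| + |c₂|) * M * ‖x‖ ^ ((4 : ℝ) - 2 * m - γ) := by ring

end Hout

/-- For `m ≥ 2`, `γ ≥ 0` with `(m,γ) ≠ (2,0)`, a homogeneous harmonic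
polynomial `P` of degree `γ` on `ℝ^(2m)` and `h, k ∈ ℝ`, the exterior extension
`u(x) = (h + k/(4(γ+m-2))) ‖x‖^(2-2m-2γ) P(x) - (k/(4(γ+m-2))) ‖x‖^(4-2m-2γ) P(x)`
is biharmonic on `ℝ^(2m) \ {0}`, satisfies `u = h P` and `Δu = k P` on the unit sphere,
and `u(x) = O(‖x‖^(4-2m-γ))` as `‖x‖ → ∞`. -/
theorem statement7 (m γ : ℕ) (hm : 2 ≤ m) (hne : ¬(m = 2 ∧ γ = 0))
    (P : EuclideanSpace ℝ (Fin (2 * m)) → ℝ)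
    (hP : IsHomHarmonicPoly (2 * m) γ P) (h k : ℝ) :
    (∀ x : EuclideanSpace ℝ (Fin (2 * m)), x ≠ 0 →
      laplacian (laplacian (Hout m γ P h k)) x = 0) ∧
    (∀ x : EuclideanSpace ℝ (Fin (2 * m)), ‖x‖ = 1 →
      Hout m γ P h k x = h * P x ∧ laplacian (Hout m γ P h k) x = k * P x) ∧
    (∃ C R : ℝ, ∀ x : EuclideanSpace ℝ (Fin (2 * m)), R ≤ ‖x‖ →
      |Hout m γ P h k x| ≤ C * ‖x‖ ^ ((4 : ℝ) - 2 * (m : ℝ) - (γ : ℝ))) := by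
  have hd : (γ : ℝ) + m - 2 ≠ 0 := by
    have : (3 : ℝ) ≤ γ + m := by exact_mod_cast (by omega : 3 ≤ γ + m)
    exact (by linarith : (0 : ℝ) < γ + m - 2).ne'
  refine ⟨fun x hx => ?_, fun x hx => ?_, exists_abs_Hout_le hP h k⟩
  · simpa only [laplacian_eq_laplacian] using laplacian_laplacian_Hout hd hP h k hx
  · have hx0 : x ≠ 0 := norm_ne_zero_iff.1 (by simp [hx])
    rw [laplacian_eq_laplacian, laplacian_Hout hd hP h k hx0, Hout, hx]
    simp only [Real.one_rpow]
    constructor <;> ring
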